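/- Uniform characteristic function limit over all biases: For every fixed t ∈ ℝ, sup_{m ∈ [−1,1]} | e^{−i m t √n} (cos(t/√n) + i m sin(t/√n))^n − exp(−(1 − m²) t²/2) | → 0 as n → ∞. (The expression e^{−imt√n}(cos(t/√n)+im sin(t/√n))^n is the characteristic function at t of Σ_{i=1}^n (X_i − m)/√n for i.i.d. {−1,1}-valued X_i with P(X_i = 1) = (1+m)/2.) -/

import Mathlib

open MeasureTheory ProbabilityTheory Filter Topology

noncomputable section

/-!
The one-step characteristic function `φ(θ) = e^{-imθ} (cos θ + i m sin θ)` is the average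
`(1+m)/2 · e^{i(1-m)θ} + (1-m)/2 · e^{-i(1+m)θ}` of two unimodular numbers. Hence `|φ| ≤ 1`, and
its Taylor expansion agrees with that of `e^{-(1-m²)θ²/2}` up to second order, which gives
`|φ(θ) - e^{-(1-m²)θ²/2}| ≤ 9|θ|³` for `|θ| ≤ 1/2`, uniformly in `m`. Since both numbers lie in
the unit disc, `|aⁿ - bⁿ| ≤ n|a - b|` bounds the error of the `n`-th powers at `θ = t/√n` by
`9n|t/√n|³ = 9t²|t|/√n → 0`.
-/

open Complex

theorem norm_pow_sub_pow_le_mul_norm_sub {R : Type*} [SeminormedRing R] [NormOneClass R]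
    {a b : R} (ha : ‖a‖ ≤ 1) (hb : ‖b‖ ≤ 1) (n : ℕ) : ‖a ^ n - b ^ n‖ ≤ n * ‖a - b‖ := by
  induction n with
  | zero => simp
  | succ n ih =>
    calc ‖a ^ (n + 1) - b ^ (n + 1)‖ = ‖a * (a ^ n - b ^ n) + (a - b) * b ^ n‖ := by
          rw [pow_succ' a, pow_succ' b]; noncomm_ring
      _ ≤ ‖a‖ * ‖a ^ n - b ^ n‖ + ‖a - b‖ * ‖b‖ ^ n :=
          (norm_add_le _ _).trans (add_le_add (norm_mul_le _ _)
            ((norm_mul_le _ _).trans (by gcongr; exact norm_pow_le _ _)))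
      _ ≤ 1 * (n * ‖a - b‖) + ‖a - b‖ * 1 := by
          gcongr
          exact pow_le_one₀ (norm_nonneg _) hb
      _ = (n + 1 : ℕ) * ‖a - b‖ := by push_cast; ring

theorem Complex.norm_exp_sub_one_sub_id_sub_sq_div_two_le {z : ℂ} (hz : ‖z‖ ≤ 1) :
    ‖exp z - 1 - z - z ^ 2 / 2‖ ≤ ‖z‖ ^ 3 :=
  calc ‖exp z - 1 - z - z ^ 2 / 2‖ = ‖exp z - ∑ k ∈ Finset.range 3, z ^ k / k.factorial‖ := by
        simp [Finset.sum_range_succ, Nat.factorial, sub_sub, add_assoc]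
    _ ≤ ‖z‖ ^ 3 * ((Nat.succ 3 : ℝ) * (Nat.factorial 3 * (3 : ℕ) : ℝ)⁻¹) :=
        exp_bound hz (by norm_num)
    _ ≤ ‖z‖ ^ 3 * 1 := by gcongr; norm_num [Nat.factorial]
    _ = ‖z‖ ^ 3 := mul_one _

/-- The characteristic function at `θ` of `X - m`, where `X = ±1` has mean `m`. -/
def centeredSignCharFun (m θ : ℝ) : ℂ :=
  exp (-(I * m * θ)) * (Real.cos θ + I * m * Real.sin θ)

def gaussianCharFun (v θ : ℝ) : ℂ :=
  exp (-((v * θ ^ 2 / 2 : ℝ) : ℂ))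

theorem centeredSignCharFun_eq (m θ : ℝ) :
    centeredSignCharFun m θ =
      (1 + m) / 2 * exp (I * ((1 - m) * θ : ℝ)) + (1 - m) / 2 * exp (I * (-(1 + m) * θ : ℝ)) := by
  have hplus : exp (I * ((1 - m) * θ : ℝ)) = exp (-(I * m * θ)) * exp (θ * I) := by
    rw [← exp_add]; push_cast; ring_nf
  have hminus : exp (I * (-(1 + m) * θ : ℝ)) = exp (-(I * m * θ)) * exp (-θ * I) := by
    rw [← exp_add]; push_cast; ring_nf
  rw [centeredSignCharFun, hplus, hminus, exp_mul_I, ← neg_mul, exp_mul_I, cos_neg, sin_neg,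
    ← ofReal_cos, ← ofReal_sin]
  ring

theorem norm_centeredSignCharFun_le_one {m : ℝ} (hm : |m| ≤ 1) (θ : ℝ) :
    ‖centeredSignCharFun m θ‖ ≤ 1 := by
  obtain ⟨hm₁, hm₂⟩ := abs_le.1 hm
  have hweight (a : ℝ) (ha : 0 ≤ a) : ‖(a : ℂ) / 2‖ = a / 2 := by
    rw [norm_div, norm_real, Real.norm_of_nonneg ha]; norm_num
  calc ‖centeredSignCharFun m θ‖
      ≤ ‖((1 + m : ℝ) : ℂ) / 2‖ * ‖exp (I * ((1 - m) * θ : ℝ))‖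
        + ‖((1 - m : ℝ) : ℂ) / 2‖ * ‖exp (I * (-(1 + m) * θ : ℝ))‖ := by
        rw [centeredSignCharFun_eq, ← norm_mul, ← norm_mul]; push_cast; exact norm_add_le _ _
    _ = 1 := by
        rw [hweight _ (by linarith), hweight _ (by linarith), norm_exp_I_mul_ofReal,
          norm_exp_I_mul_ofReal]; ring

theorem norm_gaussianCharFun_le_one {v : ℝ} (hv : 0 ≤ v) (θ : ℝ) :
    ‖gaussianCharFun v θ‖ ≤ 1 := by
  rw [gaussianCharFun, ← ofReal_neg, norm_exp_ofReal, Real.exp_le_one_iff]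
  have := sq_nonneg θ
  nlinarith

theorem norm_centeredSignCharFun_sub_gaussianCharFun_le {m θ : ℝ} (hm : |m| ≤ 1)
    (hθ : |θ| ≤ 1 / 2) :
    ‖centeredSignCharFun m θ - gaussianCharFun (1 - m ^ 2) θ‖ ≤ 9 * |θ| ^ 3 := by
  obtain ⟨hm₁, hm₂⟩ := abs_le.1 hm
  set R : ℂ → ℂ := fun z ↦ exp z - 1 - z - z ^ 2 / 2
  obtain ⟨s, hs⟩ : ∃ s : ℝ, (1 - m ^ 2) * θ ^ 2 / 2 = s := ⟨_, rfl⟩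
  -- The mixture and the Gaussian agree up to second order, so only Taylor remainders are left.
  have hsplit : centeredSignCharFun m θ - gaussianCharFun (1 - m ^ 2) θ =
      (((1 + m) / 2 : ℝ) : ℂ) * R (I * ((1 - m) * θ : ℝ))
        + (((1 - m) / 2 : ℝ) : ℂ) * R (I * (-(1 + m) * θ : ℝ)) - (exp (-s) - 1 - (-s)) := by
    have hsC : ((1 - m ^ 2) * θ ^ 2 / 2 : ℂ) = s := by exact_mod_cast hs
    rw [centeredSignCharFun_eq, gaussianCharFun, hs]
    push_cast
    linear_combination ((1 - m ^ 2) * θ ^ 2 / 2 : ℂ) * I_sq - hsC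
  have hR_le {c : ℝ} (hc : |c| ≤ 2) : ‖R (I * (c * θ : ℝ))‖ ≤ 8 * |θ| ^ 3 := by
    have hnorm : ‖I * ((c * θ : ℝ) : ℂ)‖ = |c| * |θ| := by
      rw [norm_mul, norm_I, norm_real, Real.norm_eq_abs, abs_mul, one_mul]
    have hsmall : |c| * |θ| ≤ 2 * |θ| := by gcongr
    calc ‖R (I * (c * θ : ℝ))‖ ≤ (|c| * |θ|) ^ 3 := by
          rw [← hnorm]; exact norm_exp_sub_one_sub_id_sub_sq_div_two_le (by rw [hnorm]; linarith)
      _ ≤ (2 * |θ|) ^ 3 := by gcongr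
      _ = 8 * |θ| ^ 3 := by ring
  have hR₁ : ‖R (I * ((1 - m) * θ : ℝ))‖ ≤ 8 * |θ| ^ 3 :=
    hR_le (abs_le.2 ⟨by linarith, by linarith⟩)
  have hR₂ : ‖R (I * (-(1 + m) * θ : ℝ))‖ ≤ 8 * |θ| ^ 3 :=
    hR_le (abs_le.2 ⟨by linarith, by linarith⟩)
  have hexp : ‖exp (-s) - 1 - (-s : ℂ)‖ ≤ |θ| ^ 3 := by
    have hθ_sq : θ ^ 2 = |θ| ^ 2 := (sq_abs θ).symm
    have hs₀ : 0 ≤ s := by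
      have : 0 ≤ 1 - m ^ 2 := by nlinarith
      rw [← hs]; positivity
    have hs₁ : s ≤ |θ| ^ 2 / 2 := by rw [← hs, hθ_sq]; nlinarith [sq_nonneg θ, sq_nonneg m]
    have hnorm : ‖(-s : ℂ)‖ = s := by rw [norm_neg, norm_real, Real.norm_of_nonneg hs₀]
    calc ‖exp (-s) - 1 - (-s : ℂ)‖ ≤ ‖(-s : ℂ)‖ ^ 2 :=
          norm_exp_sub_one_sub_id_le (by rw [hnorm]; nlinarith [abs_nonneg θ])
      _ = s ^ 2 := by rw [hnorm]
      _ ≤ (|θ| ^ 2 / 2) ^ 2 := by gcongr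
      _ ≤ |θ| ^ 3 := by nlinarith [abs_nonneg θ, pow_nonneg (abs_nonneg θ) 3]
  calc ‖centeredSignCharFun m θ - gaussianCharFun (1 - m ^ 2) θ‖
      ≤ ‖(((1 + m) / 2 : ℝ) : ℂ) * R (I * ((1 - m) * θ : ℝ))‖
        + ‖(((1 - m) / 2 : ℝ) : ℂ) * R (I * (-(1 + m) * θ : ℝ))‖ + ‖exp (-s) - 1 - (-s : ℂ)‖ := by
        rw [hsplit]; exact (norm_sub_le _ _).trans (by gcongr; exact norm_add_le _ _)
    _ = (1 + m) / 2 * ‖R (I * ((1 - m) * θ : ℝ))‖ + (1 - m) / 2 * ‖R (I * (-(1 + m) * θ : ℝ))‖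
        + ‖exp (-s) - 1 - (-s : ℂ)‖ := by
        rw [norm_mul, norm_mul, norm_real, norm_real, Real.norm_of_nonneg (by linarith),
          Real.norm_of_nonneg (by linarith)]
    _ ≤ 9 * |θ| ^ 3 := by
        nlinarith [mul_le_mul_of_nonneg_left hR₁ (by linarith : 0 ≤ (1 + m) / 2),
          mul_le_mul_of_nonneg_left hR₂ (by linarith : 0 ≤ (1 - m) / 2)]

theorem norm_centeredSignCharFun_pow_sub_gaussianCharFun_pow_le {m θ : ℝ} (hm : |m| ≤ 1)
    (hθ : |θ| ≤ 1 / 2) (n : ℕ) :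
    ‖centeredSignCharFun m θ ^ n - gaussianCharFun (1 - m ^ 2) θ ^ n‖ ≤ n * (9 * |θ| ^ 3) :=
  (norm_pow_sub_pow_le_mul_norm_sub (norm_centeredSignCharFun_le_one hm θ)
    (norm_gaussianCharFun_le_one (by nlinarith [abs_le.1 hm]) θ) n).trans
    (by gcongr; exact norm_centeredSignCharFun_sub_gaussianCharFun_le hm hθ)

theorem centeredSignCharFun_div_sqrt_pow (m t : ℝ) (n : ℕ) :
    centeredSignCharFun m (t / √n) ^ n =
      exp (-(I * m * t * √n)) * (Real.cos (t / √n) + I * m * Real.sin (t / √n)) ^ n := by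
  have hn : (n : ℂ) = √n * √n := by exact_mod_cast (Real.mul_self_sqrt n.cast_nonneg).symm
  rw [centeredSignCharFun, mul_pow, ← exp_nat_mul, hn]
  push_cast
  field_simp

theorem gaussianCharFun_div_sqrt_pow (v t : ℝ) {n : ℕ} (hn : n ≠ 0) :
    gaussianCharFun v (t / √n) ^ n = gaussianCharFun v t := by
  rw [gaussianCharFun, gaussianCharFun, ← exp_nat_mul, div_pow,
    Real.sq_sqrt n.cast_nonneg]
  push_cast
  field_simp

theorem tendsto_const_div_sqrt_atTop_nhds_zero_nat (t : ℝ) :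
    Tendsto (fun n : ℕ ↦ t / √n) atTop (𝓝 0) :=
  tendsto_const_nhds.div_atTop (Real.tendsto_sqrt_atTop.comp tendsto_natCast_atTop_atTop)

theorem charfun_uniform_limit (t : ℝ) :
    Tendsto
      (fun n : ℕ =>
        ⨆ m : Set.Icc (-1 : ℝ) 1,
          Norm.norm
            (Complex.exp (-(Complex.I * ((m : ℝ) : ℂ) * (t : ℂ) *
                ((Real.sqrt n : ℝ) : ℂ))) *
              (((Real.cos (t / Real.sqrt n) : ℝ) : ℂ)
                + Complex.I * ((m : ℝ) : ℂ) * ((Real.sin (t / Real.sqrt n) : ℝ) : ℂ)) ^ n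
            - Complex.exp (-(((1 - (m : ℝ) ^ 2) * t ^ 2 / 2 : ℝ) : ℂ))))
      atTop (𝓝 0) := by
  have hθ := (tendsto_const_div_sqrt_atTop_nhds_zero_nat t).abs
  rw [abs_zero] at hθ
  refine squeeze_zero' (.of_forall fun n ↦ Real.iSup_nonneg fun _ ↦ norm_nonneg _) ?_
    (by simpa using hθ.const_mul (9 * t ^ 2))
  filter_upwards [hθ.eventually_le_const (by norm_num : (0 : ℝ) < 1 / 2),
    eventually_ne_atTop 0] with n hθn hn
  have : Nonempty (Set.Icc (-1 : ℝ) 1) := ⟨⟨0, by norm_num⟩⟩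
  refine ciSup_le fun ⟨m, hm⟩ ↦ ?_
  have hrate : (n : ℝ) * (9 * |t / √n| ^ 3) = 9 * t ^ 2 * |t / √n| := by
    rw [← sq_abs t, abs_div, abs_of_nonneg (Real.sqrt_nonneg _)]
    have : (√n : ℝ) ^ 2 = n := Real.sq_sqrt n.cast_nonneg
    field_simp
    rw [this]
    ring
  have key := norm_centeredSignCharFun_pow_sub_gaussianCharFun_pow_le (abs_le.2 hm) hθn n
  rwa [centeredSignCharFun_div_sqrt_pow, gaussianCharFun_div_sqrt_pow _ _ hn,
    gaussianCharFun, hrate] at key
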